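/- Let X be a compact geodesic metric space and p ∈ X. If r > 0 satisfies 2r < sys(X,p), then every rectifiable loop whose image is contained in the open metric ball B(p,r) is nullhomotopic in X, i.e., path-homotopic rel endpoints to the constant loop at its basepoint. -/

import Mathlib

/-- The length of a path in a pseudo-emetric space: its total variation. -/
noncomputable def pathLength {X : Type*} [PseudoEMetricSpace X] {x y : X} (γ : Path x y) :
    ENNReal :=
  eVariationOn γ Set.univ

/-- A metric space is geodesic if any two points are joined by a path whose
length equals the distance between them. -/
def IsGeodesicSpace (X : Type*) [MetricSpace X] : Prop :=
  ∀ x y : X, ∃ γ : Path x y, pathLength γ = edist x y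

/-- The systole of a metric space: the infimum of lengths of noncontractible loops. -/
noncomputable def systole (X : Type*) [MetricSpace X] : ENNReal :=
  sInf {L | ∃ (x : X) (γ : Path x x), ¬γ.Homotopic (Path.refl x) ∧ pathLength γ = L}

/-- The pointed systole at `p`: the infimum of lengths of noncontractible loops based at `p`. -/
noncomputable def pointedSystole (X : Type*) [MetricSpace X] (p : X) : ENNReal :=
  sInf {L | ∃ γ : Path p p, ¬γ.Homotopic (Path.refl p) ∧ pathLength γ = L}

/-!
Join every point `q` of the ball to `p` by a geodesic spoke `g q` of length `d(p, q) < r`.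
If a path `c` from `a` to `b` in the ball is shorter than `sys(X,p) - 2r`, the loop
`g a · c · (g b)⁻¹` at `p` is shorter than `sys(X,p)`, hence contractible, so
`c ≃ (g a)⁻¹ · g b`. Since `γ` is rectifiable, its length over small parameter intervals is
small, so the set of `s` with `γ|[0,s] ≃ (g (γ 0))⁻¹ · g (γ s)` is locally constant on `[0,1]`,
hence all of `[0,1]`; at `s = 1` this gives `γ ≃ (g x)⁻¹ · g x ≃ refl x`.
-/

open Set Filter Topology unitInterval

section Length

variable {X : Type*} [PseudoEMetricSpace X] {a b c : X}

theorem pathLength_eq_eVariationOn_extend (γ : Path a b) :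
    pathLength γ = eVariationOn γ.extend (Icc 0 1) := by
  have hγ : (γ : I → X) = γ.extend ∘ Subtype.val :=
    funext fun t => (γ.extend_extends' t).symm
  rw [pathLength, hγ, eVariationOn.comp_eq_of_monotoneOn (φ := Subtype.val) _
    (fun _ _ _ _ h => h), image_univ, Subtype.range_coe]

theorem pathLength_symm (γ : Path a b) : pathLength γ.symm = pathLength γ := by
  rw [pathLength_eq_eVariationOn_extend, pathLength_eq_eVariationOn_extend, Path.extend_symm,
    ← Function.comp_def, eVariationOn.comp_eq_of_antitoneOn (φ := (1 - ·)) _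
      fun _ _ _ _ h => sub_le_sub_left h 1, image_const_sub_Icc, sub_zero, sub_self]

theorem pathLength_trans (γ : Path a b) (γ' : Path b c) :
    pathLength (γ.trans γ') = pathLength γ + pathLength γ' := by
  have hsplit := eVariationOn.Icc_add_Icc (γ.trans γ').extend (s := univ)
    (by norm_num : (0:ℝ) ≤ 1 / 2) (by norm_num : (1 / 2 : ℝ) ≤ 1) (mem_univ _)
  simp only [univ_inter] at hsplit
  simp only [pathLength_eq_eVariationOn_extend, ← hsplit]
  congr 1
  · rw [eVariationOn.eq_of_eqOn fun t ht => γ.extend_trans_of_le_half γ' ht.2,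
      ← Function.comp_def, eVariationOn.comp_eq_of_monotoneOn (φ := (2 * ·)) _
        fun _ _ _ _ h => by dsimp only; linarith, image_mul_left_Icc' two_pos]
    norm_num
  · rw [eVariationOn.eq_of_eqOn fun t ht => by
        rw [γ.extend_trans_of_half_le γ' ht.1, sub_eq_add_neg],
      ← Function.comp_def, eVariationOn.comp_eq_of_monotoneOn (φ := (2 * · + -1)) _
        fun _ _ _ _ h => by dsimp only; linarith, image_affine_Icc' two_pos]
    norm_num

theorem pathLength_subpath (γ : Path a b) (s t : I) :
    pathLength (γ.subpath s t) = eVariationOn γ (uIcc s t) := by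
  wlog hst : s ≤ t generalizing s t
  · rw [← Path.symm_subpath, pathLength_symm, this t s (le_of_not_ge hst), uIcc_comm]
  have hmono : Monotone (Icc.convexComb s t) := fun u v huv => by
    change (1 - u.1) * s + u * t ≤ (1 - v.1) * s + v * t
    nlinarith [show (s : ℝ) ≤ t from hst, show (u : ℝ) ≤ v from huv]
  rw [pathLength, ← Path.range_subpathAux, ← image_univ]
  exact eVariationOn.comp_eq_of_monotoneOn _ _ (hmono.monotoneOn univ)

end Length

theorem BoundedVariationOn.eventually_eVariationOn_uIcc_lt {α E : Type*} [LinearOrder α]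
    [TopologicalSpace α] [OrderTopology α] [PseudoEMetricSpace E] {f : α → E}
    (hf : BoundedVariationOn f univ) {x : α} (hx : ContinuousAt f x) {ε : ENNReal}
    (hε : 0 < ε) :
    ∀ᶠ y in 𝓝 x, eVariationOn f (uIcc x y) < ε := by
  have hleft := hf.tendsto_eVariationOn_Icc_zero_left (x := x) hx.continuousWithinAt
  have hright := hf.tendsto_eVariationOn_Icc_zero_right x hx.continuousWithinAt
  simp only [univ_inter, nhdsWithin_univ] at hleft hright
  filter_upwards [hleft.eventually (gt_mem_nhds hε), hright.eventually (gt_mem_nhds hε)]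
    with y hyx hxy
  rcases le_total x y with h | h
  · rwa [uIcc_of_le h]
  · rwa [uIcc_of_ge h]

namespace Path

variable {X : Type*} [TopologicalSpace X] {p a b c : X}

theorem Homotopic.trans_of_homotopic_symm_trans {g₀ : Path p a} {g₁ : Path p b}
    {g₂ : Path p c} {γ₀ : Path a b} {γ₁ : Path b c} (h₀ : γ₀.Homotopic (g₀.symm.trans g₁))
    (h₁ : γ₁.Homotopic (g₁.symm.trans g₂)) : (γ₀.trans γ₁).Homotopic (g₀.symm.trans g₂) := by
  rw [← Homotopic.Quotient.eq] at *
  simp only [Homotopic.Quotient.mk_trans, Homotopic.Quotient.mk_symm] at *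
  rw [h₀, h₁]
  grind

theorem Homotopic.symm_trans_of_trans_trans_symm {g₀ : Path p a} {g₁ : Path p b}
    {γ : Path a b} (h : (g₀.trans (γ.trans g₁.symm)).Homotopic (Path.refl p)) :
    γ.Homotopic (g₀.symm.trans g₁) := by
  rw [← Homotopic.Quotient.eq] at *
  simp only [Homotopic.Quotient.mk_trans, Homotopic.Quotient.mk_symm,
    Homotopic.Quotient.mk_refl] at *
  have h' := congrArg (fun q => (Homotopic.Quotient.mk g₀).symm.trans
    (q.trans (Homotopic.Quotient.mk g₁))) h
  grind

theorem homotopic_symm_trans_of_eventually_subpath (γ : Path a b) (G : ∀ q, Path p q)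
    (h : ∀ s, ∀ᶠ t in 𝓝 s, (γ.subpath s t).Homotopic ((G (γ s)).symm.trans (G (γ t)))) :
    γ.Homotopic ((G a).symm.trans (G b)) := by
  let P : I → Prop := fun s => (γ.subpath 0 s).Homotopic ((G (γ 0)).symm.trans (G (γ s)))
  have step {s t : I} (hs : P s)
      (hst : (γ.subpath s t).Homotopic ((G (γ s)).symm.trans (G (γ t)))) : P t :=
    (Homotopic.symm ⟨Homotopy.subpathTransSubpath γ 0 s t⟩).trans
      (hs.trans_of_homotopic_symm_trans hst)
  have hP : IsLocallyConstant P := by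
    refine (IsLocallyConstant.iff_eventually_eq P).mpr fun s => (h s).mono fun t hst => ?_
    have hts : (γ.subpath t s).Homotopic ((G (γ t)).symm.trans (G (γ s))) := by
      simpa using hst.symm₂
    exact propext ⟨(step · hts), (step · hst)⟩
  have hP₁ : P 1 := (hP.apply_eq_of_preconnectedSpace 0 1).mp <| by
    simpa [P] using (Homotopic.symm_trans (G (γ 0))).symm
  -- `γ 0 = a` and `γ 1 = b` hold only propositionally, so the endpoints are generalized first.
  have cast_endpoints {a' b' : X} (ha : a' = a) (hb : b' = b) (γ' : Path a' b')
      (hγ' : ⇑γ' = ⇑γ) (h' : γ'.Homotopic ((G a').symm.trans (G b'))) :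
      γ.Homotopic ((G a).symm.trans (G b)) := by
    subst ha hb
    rwa [Path.ext hγ'] at h'
  exact cast_endpoints γ.source γ.target _ (by simp) hP₁

end Path

section Systole

variable {X : Type*} [MetricSpace X] {p a b : X}

theorem homotopic_refl_of_pathLength_lt_pointedSystole {γ : Path p p}
    (h : pathLength γ < pointedSystole X p) : γ.Homotopic (Path.refl p) := by
  by_contra hγ
  exact (sInf_le ⟨γ, hγ, rfl⟩ : pointedSystole X p ≤ pathLength γ).not_gt h

theorem homotopic_symm_trans_of_pathLength_lt_pointedSystole (g₀ : Path p a) (g₁ : Path p b)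
    (γ : Path a b) (h : pathLength g₀ + pathLength γ + pathLength g₁ < pointedSystole X p) :
    γ.Homotopic (g₀.symm.trans g₁) := by
  refine Path.Homotopic.symm_trans_of_trans_trans_symm
    (homotopic_refl_of_pathLength_lt_pointedSystole ?_)
  rwa [pathLength_trans, pathLength_trans, pathLength_symm, ← add_assoc]

end Systole

theorem edist_add_edist_le_ofReal_two_mul {X : Type*} [PseudoMetricSpace X] {p a b : X}
    {r : ℝ} (ha : a ∈ Metric.ball p r) (hb : b ∈ Metric.ball p r) :
    edist p a + edist p b ≤ ENNReal.ofReal (2 * r) := by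
  rw [edist_dist, edist_dist, ← ENNReal.ofReal_add dist_nonneg dist_nonneg]
  exact ENNReal.ofReal_le_ofReal (by linarith [Metric.mem_ball'.mp ha, Metric.mem_ball'.mp hb])

theorem loop_in_small_ball_nullhomotopic_general {X : Type*} [MetricSpace X]
    (hgeo : IsGeodesicSpace X) (p : X) (r : ℝ)
    (hsys : ENNReal.ofReal (2 * r) < pointedSystole X p)
    (x : X) (γ : Path x x) (hrect : pathLength γ ≠ ⊤)
    (him : ∀ t, γ t ∈ Metric.ball p r) :
    γ.Homotopic (Path.refl x) := by
  choose G hG using hgeo p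
  refine (γ.homotopic_symm_trans_of_eventually_subpath G fun s => ?_).trans
    (Path.Homotopic.symm_trans (G x))
  filter_upwards [BoundedVariationOn.eventually_eVariationOn_uIcc_lt hrect
    γ.continuous.continuousAt (tsub_pos_of_lt hsys)] with t ht
  apply homotopic_symm_trans_of_pathLength_lt_pointedSystole
  rw [hG, hG, pathLength_subpath, add_right_comm]
  calc edist p (γ s) + edist p (γ t) + eVariationOn γ (uIcc s t)
      ≤ ENNReal.ofReal (2 * r) + eVariationOn γ (uIcc s t) := by
        gcongr
        exact edist_add_edist_le_ofReal_two_mul (him s) (him t)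
    _ < pointedSystole X p := lt_tsub_iff_left.mp ht

/-- In a compact geodesic metric space, if `2r < sys(X,p)`, then every
rectifiable loop whose image is contained in the open ball `B(p,r)` is nullhomotopic
(path-homotopic rel endpoints to the constant loop at its basepoint). -/
theorem loop_in_small_ball_nullhomotopic {X : Type*} [MetricSpace X] [CompactSpace X]
    (hgeo : IsGeodesicSpace X) (p : X) (r : ℝ) (hr : 0 < r)
    (hsys : ENNReal.ofReal (2 * r) < pointedSystole X p)
    (x : X) (γ : Path x x) (hrect : pathLength γ ≠ ⊤)
    (him : ∀ t, γ t ∈ Metric.ball p r) :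
    γ.Homotopic (Path.refl x) :=
  loop_in_small_ball_nullhomotopic_general hgeo p r hsys x γ hrect him
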